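/- Let (Γ,μ) be a weighted graph satisfying (p₀), (VC) and (TC). Then there is c>0 such that p_{2n}(x,x) ≥ c/V(x,e(x,2n)) for all x∈Γ and n≥1. -/

import Mathlib

open scoped BigOperators Classical

/-- A weighted graph: symmetric nonnegative edge weights on a (countably infinite,
connected) vertex set; `x ∼ y` iff `0 < w x y`. -/
structure WeightedGraph (V : Type*) where
  w : V → V → ℝ
  symm : ∀ x y, w x y = w y x
  nonneg : ∀ x y, 0 ≤ w x y
  summable' : ∀ x, Summable (w x)
  mu_pos : ∀ x, 0 < ∑' y, w x y
  connected : ∀ x y : V, Relation.ReflTransGen (fun a b => 0 < w a b) x y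

namespace WeightedGraph

variable {V : Type*}

/-- The vertex measure `μ(x) = Σ_{y∼x} μ_{xy}`. -/
noncomputable def mu (G : WeightedGraph V) (x : V) : ℝ := ∑' y, G.w x y

/-- Measure of a set of vertices. -/
noncomputable def muSet (G : WeightedGraph V) (A : Set V) : ℝ := ∑' y : A, G.mu y

/-- One-step transition probability `P(x,y) = μ_{xy}/μ(x)`. -/
noncomputable def P (G : WeightedGraph V) (x y : V) : ℝ := G.w x y / G.mu x

/-- `n`-step transition probabilities. -/
noncomputable def Pn (G : WeightedGraph V) : ℕ → V → V → ℝ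
  | 0, x, y => if x = y then 1 else 0
  | n + 1, x, y => ∑' z, G.P x z * G.Pn n z y

/-- The heat kernel `p_n(x,y) = P_n(x,y)/μ(y)`. -/
noncomputable def hk (G : WeightedGraph V) (n : ℕ) (x y : V) : ℝ := G.Pn n x y / G.mu y

/-- There is a walk of length `n` from `x` to `y`. -/
def walkLen (G : WeightedGraph V) : ℕ → V → V → Prop
  | 0, x, y => x = y
  | n + 1, x, y => ∃ z, 0 < G.w x z ∧ G.walkLen n z y

/-- The (shortest path) graph distance. -/
noncomputable def dist (G : WeightedGraph V) (x y : V) : ℕ := sInf {n | G.walkLen n x y}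

/-- Open ball `B(x,R)`. -/
def ball (G : WeightedGraph V) (x : V) (R : ℕ) : Set V := {y | G.dist x y < R}

/-- Closed ball `B̄(x,R)`. -/
def cball (G : WeightedGraph V) (x : V) (R : ℕ) : Set V := {y | G.dist x y ≤ R}

/-- Volume of a ball: `V(x,R) = μ(B(x,R))`. -/
noncomputable def vol (G : WeightedGraph V) (x : V) (R : ℕ) : ℝ := G.muSet (G.ball x R)

/-- `survive B n x` is the probability that the walk started at `x` stays inside `B`
during its first `n` steps, i.e. `P(T_B > n | X_0 = x)`. -/
noncomputable def survive (G : WeightedGraph V) (B : Set V) : ℕ → V → ℝ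
  | 0, x => if x ∈ B then 1 else 0
  | n + 1, x => if x ∈ B then ∑' y, G.P x y * G.survive B n y else 0

/-- Mean exit time `E(x,R) = E(T_{B(x,R)} | X_0 = x) = Σ_{n≥0} P(T > n)`. -/
noncomputable def meanExit (G : WeightedGraph V) (x : V) (R : ℕ) : ℝ :=
  ∑' n, G.survive (G.ball x R) n x

/-- Generalized inverse `e(x,n) = min {R ∈ ℕ : E(x,R) ≥ n}` of the mean exit time. -/
noncomputable def einv (G : WeightedGraph V) (x : V) (n : ℕ) : ℕ :=
  sInf {R : ℕ | (n : ℝ) ≤ G.meanExit x R}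

/-- Condition `(p₀)`. -/
def condP0 (G : WeightedGraph V) : Prop :=
  ∃ p₀ > (0 : ℝ), ∀ x y : V, 0 < G.w x y → p₀ ≤ G.w x y / G.mu x

/-- Volume comparison principle `(VC)`. -/
def condVC (G : WeightedGraph V) : Prop :=
  ∃ C > (1 : ℝ), ∀ (x : V) (R : ℕ), 0 < R → ∀ y ∈ G.ball x R,
    G.vol x (2 * R) ≤ C * G.vol y R

/-- Volume doubling `(VD)`. -/
def condVD (G : WeightedGraph V) : Prop :=
  ∃ D > (0 : ℝ), ∀ (x : V) (R : ℕ), 0 < R → G.vol x (2 * R) ≤ D * G.vol x R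

/-- Time comparison principle `(TC)`. -/
def condTC (G : WeightedGraph V) : Prop :=
  ∃ C > (1 : ℝ), ∀ (x : V) (R : ℕ), 0 < R → ∀ y ∈ G.ball x R,
    G.meanExit x (2 * R) ≤ C * G.meanExit y R

/-- Time doubling `(TD)`. -/
def condTD (G : WeightedGraph V) : Prop :=
  ∃ D > (0 : ℝ), ∀ (x : V) (R : ℕ), 0 < R → G.meanExit x (2 * R) ≤ D * G.meanExit x R

/-- Uniformity of the mean exit time `(E)`. -/
def condE (G : WeightedGraph V) : Prop :=
  ∃ C > (1 : ℝ), ∀ (x y : V) (R : ℕ), 0 < R → G.meanExit x R ≤ C * G.meanExit y R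

/-- `u` is harmonic on `B`: `Pu = u` on `B`. -/
def IsHarmonicOn (G : WeightedGraph V) (u : V → ℝ) (B : Set V) : Prop :=
  ∀ z ∈ B, (∑' y, G.P z y * u y) = u z

/-- Mean value inequality `(MV)`. -/
def condMV (G : WeightedGraph V) : Prop :=
  ∃ C > (0 : ℝ), ∀ (x : V) (R : ℕ), 0 < R → ∀ u : V → ℝ,
    (∀ y ∈ G.cball x R, 0 ≤ u y) → G.IsHarmonicOn u (G.ball x R) →
    u x ≤ C / G.vol x R * ∑' y : G.ball x R, u y * G.mu y

/-- Elliptic Harnack inequality `(H)`. -/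
def condH (G : WeightedGraph V) : Prop :=
  ∃ C > (0 : ℝ), ∀ (x : V) (R : ℕ), 0 < R → ∀ u : V → ℝ,
    (∀ y ∈ G.cball x (2 * R), 0 ≤ u y) → G.IsHarmonicOn u (G.ball x (2 * R)) →
    ∀ z ∈ G.ball x R, ∀ v ∈ G.ball x R, u z ≤ C * u v

/-- Skewed parabolic mean value inequality `(sPMV)`. -/
def condSPMV (G : WeightedGraph V) : Prop :=
  ∃ c₁ c₂ C : ℝ, 0 < c₁ ∧ c₁ < c₂ ∧ c₂ ≤ 1 ∧ 1 ≤ C ∧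
    ∀ (x : V) (R : ℕ), 0 < R → ∀ y ∈ G.ball x R, ∀ u : ℕ → V → ℝ,
      (∀ i ≤ ⌊c₂ * G.meanExit x R⌋₊, ∀ z ∈ G.ball x R, 0 ≤ u i z) →
      (∀ i : ℕ, i + 1 ≤ ⌊c₂ * G.meanExit x R⌋₊ → ∀ z ∈ G.ball x R,
        u (i + 1) z = ∑' v, G.P z v * u i v) →
      u ⌊c₂ * G.meanExit x R⌋₊ x ≤
        C / (G.vol y (2 * R) * G.meanExit y (2 * R)) *
          ∑ i ∈ Finset.Icc ⌈c₁ * G.meanExit x R⌉₊ ⌊c₂ * G.meanExit x R⌋₊,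
            ∑' z : G.ball x R, u i z * G.mu z

/-- The local diagonal upper estimate `P_n(x,x) ≤ C μ(x) / V(x,e(x,n))`. -/
def condLDUE (G : WeightedGraph V) : Prop :=
  ∃ C > (0 : ℝ), ∀ (x : V) (n : ℕ), 1 ≤ n →
    G.Pn n x x ≤ C * G.mu x / G.vol x (G.einv x n)

/-- The local kernel function `k_y(n,R)`: the maximal integer `1 ≤ k ≤ n` with
`n/k ≤ q E(y, ⌊R/k⌋)`, and `0` if there is no such `k`. -/
noncomputable def kker (G : WeightedGraph V) (q : ℝ) (y : V) (n R : ℕ) : ℕ :=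
  sSup {k : ℕ | 1 ≤ k ∧ k ≤ n ∧ (n : ℝ) / k ≤ q * G.meanExit y (R / k)}

/-- `k_C(x,n,R) = min_{z ∈ B(x,e(x,n))} k_z(Cn, R/C)`. -/
noncomputable def kC (G : WeightedGraph V) (q : ℝ) (Cc : ℕ) (x : V) (n R : ℕ) : ℕ :=
  sInf {m : ℕ | ∃ z ∈ G.ball x (G.einv x n), m = G.kker q z (Cc * n) (R / Cc)}

/-- `κ_C(n,x,y)`. -/
noncomputable def kappaC (G : WeightedGraph V) (q : ℝ) (Cc : ℕ) (n : ℕ) (x y : V) : ℕ :=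
  if 3 * (G.einv x n + G.einv y n) < G.dist x y then
    max (G.kC q Cc x n (G.dist x y)) (G.kC q Cc y n (G.dist x y))
  else 0

/-- The local upper estimate (LUE). -/
def condLUE (G : WeightedGraph V) : Prop :=
  ∃ q > (0 : ℝ), ∃ C > (0 : ℝ), ∃ c > (0 : ℝ), ∀ (x y : V) (n : ℕ), 1 ≤ n →
    G.hk n x y ≤
      C / Real.sqrt (G.vol x (G.einv x n) * G.vol y (G.einv y n)) *
        Real.exp (-c * (G.kappaC q 3 n x y : ℝ))

/-- `A_{x,y} = B(x,d(x,y)) ∪ B(y,d(x,y))`. -/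
def Axy (G : WeightedGraph V) (x y : V) : Set V :=
  G.ball x (G.dist x y) ∪ G.ball y (G.dist x y)

/-- `κ(n,x,y) = min_{z ∈ A_{x,y}} k_z(3n, d(x,y)/3)` if `d(x,y) > 3[e(x,n)+e(y,n)]`,
and `0` otherwise. -/
noncomputable def kappa (G : WeightedGraph V) (q : ℝ) (n : ℕ) (x y : V) : ℕ :=
  if 3 * (G.einv x n + G.einv y n) < G.dist x y then
    sInf {m : ℕ | ∃ z ∈ G.Axy x y, m = G.kker q z (3 * n) (G.dist x y / 3)}
  else 0

/-- `l(n,x,y) = max_{z ∈ A_{x,y}} k_z(n, d(x,y))`. -/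
noncomputable def lfun (G : WeightedGraph V) (q : ℝ) (n : ℕ) (x y : V) : ℕ :=
  sSup {m : ℕ | ∃ z ∈ G.Axy x y, m = G.kker q z n (G.dist x y)}

/-- Inhomogeneity of the mean exit time: `δ(n,A) = log max_{z,v∈A} e(z,n)/e(v,n)`. -/
noncomputable def deltaIn (G : WeightedGraph V) (n : ℕ) (A : Set V) : ℝ :=
  Real.log (sSup {r : ℝ | ∃ z ∈ A, ∃ v ∈ A, r = (G.einv z n : ℝ) / (G.einv v n)})

/-- The lower sub-Gaussian kernel `ν(n,x,y) = l(n,x,y)[1 + δ(n,A_{x,y})]`. -/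
noncomputable def nu (G : WeightedGraph V) (q : ℝ) (n : ℕ) (x y : V) : ℝ :=
  (G.lfun q n x y : ℝ) * (1 + G.deltaIn n (G.Axy x y))

/-- `F` is a space-time scale function satisfying `(ED_F)`. -/
def EDF (F : ℕ → ℝ) : Prop :=
  StrictMono F ∧ (∀ R, 0 < F R) ∧
    ∃ D > (0 : ℝ), ∃ β > (1 : ℝ), ∃ c > (0 : ℝ),
      (∀ R, F (2 * R) ≤ D * F R) ∧
      ∀ r R : ℕ, 1 ≤ r → r ≤ R → c * ((R : ℝ) / r) ^ β ≤ F R / F r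

/-- Generalized inverse `f = F⁻¹`. -/
noncomputable def finv (F : ℕ → ℝ) (n : ℕ) : ℕ := sInf {R : ℕ | (n : ℝ) ≤ F R}

/-- The kernel `k(n,R)` built from `F`: the maximal integer `1 ≤ k ≤ n` with
`n/k ≤ q F(⌊R/k⌋)`, and `0` if there is no such `k`. -/
noncomputable def kF (q : ℝ) (F : ℕ → ℝ) (n R : ℕ) : ℕ :=
  sSup {k : ℕ | 1 ≤ k ∧ k ≤ n ∧ (n : ℝ) / k ≤ q * F (R / k)}

/-- Sub-Gaussian upper estimate `(UE_F)`. -/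
def condUEF (G : WeightedGraph V) (F : ℕ → ℝ) : Prop :=
  ∃ q > (0 : ℝ), ∃ C > (0 : ℝ), ∃ c > (0 : ℝ), ∀ (x y : V) (n : ℕ), 1 ≤ n →
    G.Pn n x y ≤
      C * G.mu y / G.vol x (finv F n) * Real.exp (-c * (kF q F n (G.dist x y) : ℝ))

/-- Sub-Gaussian lower estimate `(LE_F)`. -/
def condLEF (G : WeightedGraph V) (F : ℕ → ℝ) : Prop :=
  ∃ q > (0 : ℝ), ∃ c > (0 : ℝ), ∃ C > (0 : ℝ), ∀ (x y : V) (n : ℕ), 1 ≤ n →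
    c * G.mu y / G.vol x (finv F n) * Real.exp (-C * (kF q F n (G.dist x y) : ℝ)) ≤
      G.Pn n x y + G.Pn (n + 1) x y

/-- `F`-parabolic Harnack inequality `(PH_F)`. -/
def condPHF (G : WeightedGraph V) (F : ℕ → ℝ) : Prop :=
  ∃ CH > (0 : ℝ), ∀ (x : V) (R k : ℕ), 0 < R → ∀ u : ℕ → V → ℝ,
    (∀ i : ℕ, k ≤ i → (i : ℝ) ≤ k + F (4 * R) → ∀ z ∈ G.ball x (2 * R), 0 ≤ u i z) →
    (∀ i : ℕ, k ≤ i → ((i : ℝ) + 1) ≤ k + F (4 * R) → ∀ z ∈ G.ball x (2 * R),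
      u (i + 1) z = ∑' v, G.P z v * u i v) →
    ∀ nm np : ℕ, ∀ xm ∈ G.ball x R, ∀ xp ∈ G.ball x R,
      (k : ℝ) + F R ≤ nm → (nm : ℝ) ≤ k + F (2 * R) →
      (k : ℝ) + F (3 * R) ≤ np → (np : ℝ) ≤ k + F (4 * R) →
      (G.dist xm xp : ℝ) ≤ (np : ℝ) - nm →
      u nm xm ≤ CH * (u np xp + u (np + 1) xp)

end WeightedGraph

/-!
Put `R = e(x, 2n)` and `B = B(x, R)`, so that `E(x, R) ≥ 2n`. By `(TC)` the mean exit time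
from `B` is at most `C E(x, R)` from every starting point in `B`, so the Markov property at time
`n` gives `E(x, R) ≤ n + P_x(T_B > n) C E(x, R)`, whence `P_x(T_B > n) ≥ 1 / (2C)`. Since
`P_x(T_B > n) ≤ P_x(X_n ∈ B)`, reversibility and Cauchy–Schwarz give
`p_{2n}(x, x) = Σ_y p_n(x, y)² μ(y) ≥ P_x(X_n ∈ B)² / μ(B) ≥ 1 / (4 C² V(x, R))`.
-/

lemma summable_of_forall_add_le_mul {f : ℕ → ℝ} {θ : ℝ} {m : ℕ} (hf : ∀ n, 0 ≤ f n)
    (hθ : θ < 1) (h : ∀ n, f (n + m) ≤ θ * f n) : Summable f := by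
  set θ' := max θ 0
  have h' : ∀ n, f (n + m) ≤ θ' * f n :=
    fun n => (h n).trans (mul_le_mul_of_nonneg_right (le_max_left _ _) (hf n))
  have hθ' : θ' < 1 := max_lt hθ one_pos
  set S : ℕ → ℝ := fun N => ∑ i ∈ Finset.range N, f i
  refine summable_of_sum_range_le hf (c := S m / (1 - θ')) fun N => ?_
  have hmono : S N ≤ S (m + N) :=
    Finset.sum_le_sum_of_subset_of_nonneg (Finset.range_subset_range.2 (by omega))
      fun i _ _ => hf i
  have hrec : S (m + N) ≤ S m + θ' * S (m + N) :=
    calc S (m + N) = S m + ∑ i ∈ Finset.range N, f (m + i) := Finset.sum_range_add f m N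
      _ ≤ S m + θ' * S N := by
        rw [Finset.mul_sum]
        gcongr with i
        rw [add_comm]
        exact h' i
      _ ≤ S m + θ' * S (m + N) := by gcongr
  rw [le_div_iff₀ (by linarith)]
  nlinarith

namespace WeightedGraph

variable {V : Type*} (G : WeightedGraph V)

lemma mu_pos' (x : V) : 0 < G.mu x := G.mu_pos x

lemma w_le_mu (x y : V) : G.w x y ≤ G.mu x :=
  (G.summable' x).le_tsum y fun z _ => G.nonneg x z

lemma P_nonneg (x y : V) : 0 ≤ G.P x y := div_nonneg (G.nonneg x y) (G.mu_pos' x).le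

lemma P_le_one (x y : V) : G.P x y ≤ 1 := div_le_one_of_le₀ (G.w_le_mu x y) (G.mu_pos' x).le

lemma summable_P (x : V) : Summable (G.P x) := (G.summable' x).div_const _

lemma tsum_P (x : V) : ∑' y, G.P x y = 1 := by
  unfold P
  rw [tsum_div_const]
  exact div_self (G.mu_pos' x).ne'

lemma mu_mul_P (x y : V) : G.mu x * G.P x y = G.w x y := mul_div_cancel₀ _ (G.mu_pos' x).ne'

lemma adj_of_P_ne_zero {x y : V} (h : G.P x y ≠ 0) : 0 < G.w x y :=
  (G.nonneg x y).lt_of_ne fun h0 => h (by simp [P, ← h0])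

lemma exists_adj (x : V) : ∃ y, 0 < G.w x y := by
  by_contra! h
  exact (G.mu_pos' x).not_ge (tsum_nonpos h)

lemma summable_P_mul_of_bdd {g : V → ℝ} {M : ℝ} (h0 : ∀ y, 0 ≤ g y) (hM : ∀ y, g y ≤ M)
    (x : V) : Summable fun y => G.P x y * g y :=
  ((G.summable_P x).mul_right M).of_nonneg_of_le (fun y => mul_nonneg (G.P_nonneg x y) (h0 y))
    fun y => mul_le_mul_of_nonneg_left (hM y) (G.P_nonneg x y)

lemma walkLen_add {a b : ℕ} {x y z : V} (hxy : G.walkLen a x y) (hyz : G.walkLen b y z) :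
    G.walkLen (a + b) x z := by
  induction a generalizing x with
  | zero =>
    obtain rfl : x = y := hxy
    simpa using hyz
  | succ a ih =>
    obtain ⟨u, hxu, huy⟩ := hxy
    rw [add_right_comm]
    exact ⟨u, hxu, ih huy⟩

lemma walkLen_one {x y : V} (h : 0 < G.w x y) : G.walkLen 1 x y := ⟨y, h, rfl⟩

lemma walkLen_symm {n : ℕ} {x y : V} (h : G.walkLen n x y) : G.walkLen n y x := by
  induction n generalizing x with
  | zero => exact (h : x = y).symm
  | succ n ih =>
    obtain ⟨u, hxu, huy⟩ := h
    exact G.walkLen_add (ih huy) (G.walkLen_one (G.symm x u ▸ hxu))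

lemma exists_walkLen (x y : V) : ∃ n, G.walkLen n x y := by
  induction G.connected x y with
  | refl => exact ⟨0, rfl⟩
  | tail _ hbc ih =>
    obtain ⟨n, hn⟩ := ih
    exact ⟨n + 1, G.walkLen_add hn (G.walkLen_one hbc)⟩

lemma walkLen_dist (x y : V) : G.walkLen (G.dist x y) x y := Nat.sInf_mem (G.exists_walkLen x y)

lemma dist_le_of_walkLen {n : ℕ} {x y : V} (h : G.walkLen n x y) : G.dist x y ≤ n := Nat.sInf_le h

lemma dist_self (x : V) : G.dist x x = 0 := Nat.le_zero.1 (G.dist_le_of_walkLen rfl)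

lemma eq_of_dist_eq_zero {x y : V} (h : G.dist x y = 0) : x = y := by
  have := G.walkLen_dist x y
  rwa [h] at this

lemma dist_comm (x y : V) : G.dist x y = G.dist y x :=
  (G.dist_le_of_walkLen (G.walkLen_symm (G.walkLen_dist y x))).antisymm
    (G.dist_le_of_walkLen (G.walkLen_symm (G.walkLen_dist x y)))

lemma dist_triangle (x y z : V) : G.dist x z ≤ G.dist x y + G.dist y z :=
  G.dist_le_of_walkLen (G.walkLen_add (G.walkLen_dist x y) (G.walkLen_dist y z))

lemma dist_le_one_of_adj {x y : V} (h : 0 < G.w x y) : G.dist x y ≤ 1 :=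
  G.dist_le_of_walkLen (G.walkLen_one h)

lemma finite_adj (hp0 : G.condP0) (x : V) : {y | 0 < G.w x y}.Finite := by
  obtain ⟨p₀, hp, hP⟩ := hp0
  have hsmall : ∀ᶠ y in Filter.cofinite, G.w x y < p₀ * G.mu x :=
    (G.summable' x).tendsto_cofinite_zero.eventually (gt_mem_nhds (mul_pos hp (G.mu_pos' x)))
  exact (Filter.eventually_cofinite.1 hsmall).subset fun y hy =>
    not_lt.2 ((le_div_iff₀ (G.mu_pos' x)).1 (hP x y hy))

lemma ball_finite (hp0 : G.condP0) (x : V) (R : ℕ) : (G.ball x R).Finite := by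
  induction R generalizing x with
  | zero => exact Set.finite_empty.subset fun y hy => absurd hy (Nat.not_lt_zero _)
  | succ R ih =>
    refine (((G.finite_adj hp0 x).biUnion fun z _ => ih z).insert x).subset fun y hy => ?_
    have hwalk := G.walkLen_dist x y
    cases hd : G.dist x y with
    | zero => exact Or.inl (G.eq_of_dist_eq_zero hd).symm
    | succ k =>
      rw [hd] at hwalk
      obtain ⟨z, hxz, hzy⟩ := hwalk
      have hk : k < R := by have : G.dist x y < R + 1 := hy; omega
      exact Or.inr (Set.mem_biUnion hxz ((G.dist_le_of_walkLen hzy).trans_lt hk))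

lemma summable_P_mul (hp0 : G.condP0) (x : V) (g : V → ℝ) : Summable fun y => G.P x y * g y :=
  summable_of_hasFiniteSupport <| (G.finite_adj hp0 x).subset fun _ hy =>
    G.adj_of_P_ne_zero (left_ne_zero_of_mul hy)

/-- By `(p₀)` only finitely many terms are nonzero. -/
lemma tsum_P_mul_tsum_comm (hp0 : G.condP0) (x : V) {a : ℕ} {F : V → V → ℝ}
    (hF : ∀ w z, F w z ≠ 0 → G.dist w z ≤ a) :
    ∑' w, G.P x w * ∑' z, F w z = ∑' z, ∑' w, G.P x w * F w z := by
  have hfin : (Function.support (Function.uncurry fun w z => G.P x w * F w z)).Finite := by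
    refine ((G.ball_finite hp0 x 2).prod (G.ball_finite hp0 x (a + 2))).subset ?_
    rintro ⟨w, z⟩ h
    obtain ⟨hP, hFwz⟩ : G.P x w ≠ 0 ∧ F w z ≠ 0 := mul_ne_zero_iff.1 h
    have hxw := G.dist_le_one_of_adj (G.adj_of_P_ne_zero hP)
    have hxz := G.dist_triangle x w z
    have hwz := hF w z hFwz
    exact ⟨show G.dist x w < 2 by omega, show G.dist x z < a + 2 by omega⟩
  simp_rw [← tsum_mul_left]
  exact (summable_of_hasFiniteSupport hfin).tsum_comm.symm

lemma Pn_nonneg (n : ℕ) (x y : V) : 0 ≤ G.Pn n x y := by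
  induction n generalizing x with
  | zero => unfold Pn; positivity
  | succ n ih => exact tsum_nonneg fun z => mul_nonneg (G.P_nonneg x z) (ih z)

lemma Pn_one (x y : V) : G.Pn 1 x y = G.P x y := by
  rw [Pn, tsum_eq_single y fun z hz => by simp [Pn, hz]]
  simp [Pn]

lemma dist_le_of_Pn_ne_zero {n : ℕ} {x y : V} (h : G.Pn n x y ≠ 0) : G.dist x y ≤ n := by
  induction n generalizing x with
  | zero =>
    obtain rfl : x = y := by simpa [Pn] using h
    simp [dist_self]
  | succ n ih =>
    obtain ⟨z, hz⟩ : ∃ z, G.P x z * G.Pn n z y ≠ 0 := by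
      by_contra! h0
      exact h (by simp [Pn, h0])
    obtain ⟨hP, hPn⟩ := mul_ne_zero_iff.1 hz
    have hxz := G.dist_le_one_of_adj (G.adj_of_P_ne_zero hP)
    have hxy := G.dist_triangle x z y
    have hzy := ih hPn
    omega

lemma Pn_finite_support (hp0 : G.condP0) (n : ℕ) (x : V) :
    (Function.support (G.Pn n x)).Finite :=
  (G.ball_finite hp0 x (n + 1)).subset fun _ hy => Nat.lt_succ_of_le (G.dist_le_of_Pn_ne_zero hy)

theorem Pn_add (hp0 : G.condP0) (a b : ℕ) (x y : V) :
    G.Pn (a + b) x y = ∑' z, G.Pn a x z * G.Pn b z y := by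
  induction a generalizing x with
  | zero =>
    rw [zero_add, tsum_eq_single x fun z hz => by simp [Pn, Ne.symm hz]]
    simp [Pn]
  | succ a ih =>
    calc G.Pn (a + 1 + b) x y = ∑' w, G.P x w * ∑' z, G.Pn a w z * G.Pn b z y := by
          rw [add_right_comm, Pn]
          simp_rw [ih]
      _ = ∑' z, ∑' w, G.P x w * (G.Pn a w z * G.Pn b z y) :=
          G.tsum_P_mul_tsum_comm hp0 x fun w z h => G.dist_le_of_Pn_ne_zero (left_ne_zero_of_mul h)
      _ = ∑' z, G.Pn (a + 1) x z * G.Pn b z y := by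
          simp_rw [← mul_assoc, tsum_mul_right]
          rfl

lemma Pn_succ' (hp0 : G.condP0) (n : ℕ) (x y : V) :
    G.Pn (n + 1) x y = ∑' z, G.Pn n x z * G.P z y := by
  simp_rw [G.Pn_add hp0 n 1, Pn_one]

theorem mu_mul_Pn_comm (hp0 : G.condP0) (n : ℕ) (x y : V) :
    G.mu x * G.Pn n x y = G.mu y * G.Pn n y x := by
  induction n generalizing x y with
  | zero =>
    by_cases h : x = y
    · rw [h]
    · simp [Pn, h, Ne.symm h]
  | succ n ih =>
    rw [G.Pn_succ' hp0, Pn, ← tsum_mul_left, ← tsum_mul_left]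
    refine tsum_congr fun z => ?_
    linear_combination G.P z y * ih x z + G.Pn n z x * G.mu_mul_P z y
      - G.Pn n z x * G.mu_mul_P y z + G.Pn n z x * G.symm z y

theorem hk_two_mul_self (hp0 : G.condP0) (n : ℕ) (x : V) :
    G.hk (2 * n) x x = ∑' y, G.Pn n x y ^ 2 / G.mu y := by
  rw [hk, two_mul, G.Pn_add hp0, ← tsum_div_const]
  refine tsum_congr fun y => ?_
  rw [div_eq_div_iff (G.mu_pos' x).ne' (G.mu_pos' y).ne']
  linear_combination (-G.Pn n x y) * G.mu_mul_Pn_comm hp0 n x y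

noncomputable def meanExitOf (B : Set V) (z : V) : ℝ := ∑' n, G.survive B n z

lemma survive_of_notMem {B : Set V} {x : V} (hx : x ∉ B) (n : ℕ) : G.survive B n x = 0 := by
  cases n <;> simp [survive, hx]

lemma survive_zero_of_mem {B : Set V} {x : V} (hx : x ∈ B) : G.survive B 0 x = 1 := if_pos hx

lemma survive_succ_of_mem {B : Set V} {x : V} (hx : x ∈ B) (n : ℕ) :
    G.survive B (n + 1) x = ∑' y, G.P x y * G.survive B n y := if_pos hx

lemma survive_nonneg (B : Set V) (n : ℕ) (x : V) : 0 ≤ G.survive B n x := by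
  induction n generalizing x with
  | zero => unfold survive; positivity
  | succ n ih =>
    unfold survive
    split_ifs
    exacts [tsum_nonneg fun y => mul_nonneg (G.P_nonneg x y) (ih y), le_rfl]

lemma survive_succ_le (B : Set V) (n : ℕ) (x : V) :
    G.survive B (n + 1) x ≤ ∑' y, G.P x y * G.survive B n y := by
  by_cases hx : x ∈ B
  · simp [survive, hx]
  · rw [G.survive_of_notMem hx]
    exact tsum_nonneg fun y => mul_nonneg (G.P_nonneg x y) (G.survive_nonneg B n y)

lemma survive_le_one (B : Set V) (n : ℕ) (x : V) : G.survive B n x ≤ 1 := by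
  induction n generalizing x with
  | zero => unfold survive; split_ifs <;> norm_num
  | succ n ih =>
    calc G.survive B (n + 1) x ≤ ∑' y, G.P x y * G.survive B n y := G.survive_succ_le B n x
      _ ≤ ∑' y, G.P x y :=
        Summable.tsum_le_tsum (fun y => mul_le_of_le_one_right (G.P_nonneg x y) (ih y))
          (G.summable_P_mul_of_bdd (G.survive_nonneg B n) ih x) (G.summable_P x)
      _ = 1 := G.tsum_P x

lemma summable_P_mul_survive (B : Set V) (n : ℕ) (x : V) :
    Summable fun y => G.P x y * G.survive B n y :=
  G.summable_P_mul_of_bdd (G.survive_nonneg B n) (G.survive_le_one B n) x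

lemma survive_succ_le_survive {B : Set V} (n : ℕ) (x : V) :
    G.survive B (n + 1) x ≤ G.survive B n x := by
  induction n generalizing x with
  | zero =>
    by_cases hx : x ∈ B
    · rw [G.survive_zero_of_mem hx]
      exact G.survive_le_one B 1 x
    · simp [G.survive_of_notMem hx]
  | succ n ih =>
    by_cases hx : x ∈ B
    · rw [G.survive_succ_of_mem hx, G.survive_succ_of_mem hx]
      exact Summable.tsum_le_tsum (fun y => mul_le_mul_of_nonneg_left (ih y) (G.P_nonneg x y))
        (G.summable_P_mul_survive B _ x) (G.summable_P_mul_survive B _ x)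
    · simp [G.survive_of_notMem hx]

lemma survive_antitone {B : Set V} (x : V) : Antitone fun n => G.survive B n x :=
  antitone_nat_of_succ_le fun n => G.survive_succ_le_survive n x

lemma survive_mono {B B' : Set V} (hBB' : B ⊆ B') (n : ℕ) (x : V) :
    G.survive B n x ≤ G.survive B' n x := by
  induction n generalizing x with
  | zero =>
    by_cases hx : x ∈ B
    · rw [G.survive_zero_of_mem hx, G.survive_zero_of_mem (hBB' hx)]
    · rw [G.survive_of_notMem hx]
      exact G.survive_nonneg B' 0 x
  | succ n ih =>
    by_cases hx : x ∈ B
    · rw [G.survive_succ_of_mem hx, G.survive_succ_of_mem (hBB' hx)]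
      exact Summable.tsum_le_tsum (fun y => mul_le_mul_of_nonneg_left (ih y) (G.P_nonneg x y))
        (G.summable_P_mul_survive B _ x) (G.summable_P_mul_survive B' _ x)
    · rw [G.survive_of_notMem hx]
      exact G.survive_nonneg B' _ x

theorem survive_add_le {B : Set V} {b : ℕ} {S : ℝ} (hS : ∀ z ∈ B, G.survive B b z ≤ S)
    (a : ℕ) (x : V) : G.survive B (a + b) x ≤ S * G.survive B a x := by
  induction a generalizing x with
  | zero =>
    by_cases hx : x ∈ B
    · simpa [G.survive_zero_of_mem hx] using hS x hx
    · simp [G.survive_of_notMem hx]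
  | succ a ih =>
    by_cases hx : x ∈ B
    · rw [add_right_comm, G.survive_succ_of_mem hx, G.survive_succ_of_mem hx, ← tsum_mul_left]
      refine Summable.tsum_le_tsum (fun y => ?_) (G.summable_P_mul_survive B _ x)
        ((G.summable_P_mul_survive B a x).mul_left S)
      rw [mul_left_comm]
      exact mul_le_mul_of_nonneg_left (ih y) (G.P_nonneg x y)
    · simp [G.survive_of_notMem hx]

/-- The walk follows the given path out of `B` with probability at least `p₀ ^ ℓ`. -/
theorem survive_le_one_sub_pow {B : Set V} {p₀ : ℝ} (hp : 0 ≤ p₀)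
    (hP : ∀ x y : V, 0 < G.w x y → p₀ ≤ G.P x y) {y : V} (hy : y ∉ B) {ℓ : ℕ} {z : V}
    (hwalk : G.walkLen ℓ z y) : G.survive B ℓ z ≤ 1 - p₀ ^ ℓ := by
  induction ℓ generalizing z with
  | zero =>
    obtain rfl : z = y := hwalk
    simp [G.survive_of_notMem hy]
  | succ m ih =>
    obtain ⟨v, hzv, hv⟩ := hwalk
    have hesc : p₀ * p₀ ^ m ≤ G.P z v * (1 - G.survive B m v) :=
      mul_le_mul (hP z v hzv) (by linarith [ih hv]) (pow_nonneg hp m) (G.P_nonneg z v)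
    have hsumm : Summable fun u => G.P z u * (1 - G.survive B m u) :=
      G.summable_P_mul_of_bdd (fun u => sub_nonneg.2 (G.survive_le_one B m u))
        (fun u => sub_le_self 1 (G.survive_nonneg B m u)) z
    calc G.survive B (m + 1) z ≤ ∑' u, G.P z u * G.survive B m u := G.survive_succ_le B m z
      _ = 1 - ∑' u, G.P z u * (1 - G.survive B m u) := by
        simp_rw [mul_one_sub]
        rw [(G.summable_P z).tsum_sub (G.summable_P_mul_survive B m z), G.tsum_P]
        ring
      _ ≤ 1 - G.P z v * (1 - G.survive B m v) := by
        gcongr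
        exact hsumm.le_tsum v fun u _ =>
          mul_nonneg (G.P_nonneg z u) (sub_nonneg.2 (G.survive_le_one B m u))
      _ ≤ 1 - p₀ ^ (m + 1) := by rw [pow_succ']; linarith

/-- On an infinite graph a finite set is left along some walk; by `(p₀)` this happens with
probability bounded below in a bounded number of steps, so survival decays geometrically. -/
theorem summable_survive {B : Set V} (hp0 : G.condP0) [Infinite V] (hB : B.Finite) (x : V) :
    Summable fun n => G.survive B n x := by
  obtain ⟨p₀, hp, hP⟩ := hp0
  have hp1 : p₀ ≤ 1 := by
    obtain ⟨v, hv⟩ := G.exists_adj x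
    exact (hP x v hv).trans (G.P_le_one x v)
  obtain ⟨y, hy⟩ := hB.infinite_compl.nonempty
  obtain ⟨t, rfl⟩ := hB.exists_finset_coe
  set m := t.sup (G.dist · y)
  have hS : ∀ z ∈ (t : Set V), G.survive t m z ≤ 1 - p₀ ^ m := fun z hz =>
    have hzm : G.dist z y ≤ m := Finset.le_sup (f := (G.dist · y)) hz
    calc G.survive t m z ≤ G.survive t (G.dist z y) z := G.survive_antitone z hzm
      _ ≤ 1 - p₀ ^ G.dist z y := G.survive_le_one_sub_pow hp.le hP hy (G.walkLen_dist z y)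
      _ ≤ 1 - p₀ ^ m := by gcongr 1 - ?_; exact pow_le_pow_of_le_one hp.le hp1 hzm
  exact summable_of_forall_add_le_mul (G.survive_nonneg t · x) (by linarith [pow_pos hp m])
    fun n => G.survive_add_le hS n x

theorem meanExitOf_mono (hp0 : G.condP0) [Infinite V] {B B' : Set V} (hBB' : B ⊆ B')
    (hB' : B'.Finite) (z : V) : G.meanExitOf B z ≤ G.meanExitOf B' z :=
  Summable.tsum_le_tsum (fun n => G.survive_mono hBB' n z)
    (G.summable_survive hp0 (hB'.subset hBB') z) (G.summable_survive hp0 hB' z)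

lemma survive_ball_eq_one {x : V} {R j : ℕ} {z : V} (h : G.dist x z + j < R) :
    G.survive (G.ball x R) j z = 1 := by
  induction j generalizing z with
  | zero => exact G.survive_zero_of_mem (show G.dist x z < R by omega)
  | succ j ih =>
    rw [G.survive_succ_of_mem (show G.dist x z < R by omega), ← G.tsum_P z]
    refine tsum_congr fun u => ?_
    by_cases hu : G.P z u = 0
    · simp [hu]
    · have hzu := G.dist_le_one_of_adj (G.adj_of_P_ne_zero hu)
      have hxu := G.dist_triangle x z u
      rw [ih (by omega), mul_one]

theorem le_meanExit (hp0 : G.condP0) [Infinite V] (x : V) (R : ℕ) :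
    (R : ℝ) ≤ G.meanExit x R :=
  calc (R : ℝ) = ∑ j ∈ Finset.range R, G.survive (G.ball x R) j x := by
        rw [Finset.sum_congr rfl fun j hj => G.survive_ball_eq_one (by
          rw [G.dist_self]; simpa using hj)]
        simp
    _ ≤ G.meanExit x R :=
        (G.summable_survive hp0 (G.ball_finite hp0 x R) x).sum_le_tsum _
          fun j _ => G.survive_nonneg _ j x

theorem le_meanExit_einv (hp0 : G.condP0) [Infinite V] (x : V) (n : ℕ) :
    (n : ℝ) ≤ G.meanExit x (G.einv x n) :=
  Nat.sInf_mem (s := {R : ℕ | (n : ℝ) ≤ G.meanExit x R}) ⟨n, G.le_meanExit hp0 x n⟩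

/-- The Markov property at time `a`. -/
theorem tsum_survive_add_le {B : Set V} (hp0 : G.condP0) [Infinite V] (hB : B.Finite) {M : ℝ}
    (hM : ∀ z ∈ B, G.meanExitOf B z ≤ M) (a : ℕ) (x : V) :
    ∑' j, G.survive B (j + a) x ≤ G.survive B a x * M := by
  obtain ⟨t, rfl⟩ := hB.exists_finset_coe
  have htsum_eq : ∀ k x, ∑' y, G.P x y * G.survive t k y = ∑ y ∈ t, G.P x y * G.survive t k y :=
    fun k x => tsum_eq_sum fun y hy => by rw [G.survive_of_notMem hy, mul_zero]
  induction a generalizing x with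
  | zero =>
    by_cases hx : x ∈ (t : Set V)
    · simpa [G.survive_zero_of_mem hx, meanExitOf] using hM x hx
    · simp [G.survive_of_notMem hx]
  | succ a ih =>
    by_cases hx : x ∈ (t : Set V)
    · have hsumm : ∀ y ∈ t, Summable fun j => G.P x y * G.survive t (j + a) y := fun y _ =>
        ((summable_nat_add_iff a).2 (G.summable_survive hp0 hB y)).mul_left _
      calc ∑' j, G.survive t (j + (a + 1)) x
          = ∑ y ∈ t, G.P x y * ∑' j, G.survive t (j + a) y := by
            simp_rw [← add_assoc, G.survive_succ_of_mem hx, htsum_eq, ← tsum_mul_left]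
            exact Summable.tsum_finsetSum hsumm
        _ ≤ ∑ y ∈ t, G.P x y * (G.survive t a y * M) :=
            Finset.sum_le_sum fun y _ => mul_le_mul_of_nonneg_left (ih y) (G.P_nonneg x y)
        _ = G.survive t (a + 1) x * M := by
            rw [G.survive_succ_of_mem hx, htsum_eq, Finset.sum_mul]
            simp_rw [mul_assoc]
    · simp [G.survive_of_notMem hx]

theorem one_div_two_mul_le_survive {B : Set V} (hp0 : G.condP0) [Infinite V] (hB : B.Finite)
    {x : V} {n : ℕ} {C : ℝ} (hn : 0 < n) (hE : 2 * (n : ℝ) ≤ G.meanExitOf B x)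
    (hM : ∀ z ∈ B, G.meanExitOf B z ≤ C * G.meanExitOf B x) :
    1 / (2 * C) ≤ G.survive B n x := by
  set E := G.meanExitOf B x
  have hsplit : ∑ i ∈ Finset.range n, G.survive B i x + ∑' i, G.survive B (i + n) x = E :=
    (G.summable_survive hp0 hB x).sum_add_tsum_nat_add n
  have hhead : ∑ i ∈ Finset.range n, G.survive B i x ≤ n := by
    simpa using Finset.sum_le_card_nsmul (Finset.range n) _ 1 fun i _ => G.survive_le_one B i x
  have htail := G.tsum_survive_add_le hp0 hB hM n x
  have hEpos : 0 < E := by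
    have : (1 : ℝ) ≤ n := by exact_mod_cast hn
    linarith
  have hs := G.survive_nonneg B n x
  have hsC : 1 ≤ 2 * (G.survive B n x * C) := by nlinarith
  have hC : 0 < C := by nlinarith
  rw [div_le_iff₀ (by positivity)]
  linarith

theorem survive_le_tsum_Pn (hp0 : G.condP0) (B : Set V) (n : ℕ) (x : V) :
    G.survive B n x ≤ ∑' y : B, G.Pn n x y := by
  rw [tsum_subtype]
  induction n generalizing x with
  | zero =>
    by_cases hx : x ∈ B
    · rw [G.survive_zero_of_mem hx,
        tsum_eq_single x fun y hy => by simp [Set.indicator, Pn, Ne.symm hy]]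
      simp [Set.indicator, hx, Pn]
    · rw [G.survive_of_notMem hx]
      exact tsum_nonneg fun y => Set.indicator_nonneg (fun z _ => G.Pn_nonneg 0 x z) y
  | succ n ih =>
    calc G.survive B (n + 1) x ≤ ∑' y, G.P x y * G.survive B n y := G.survive_succ_le B n x
      _ ≤ ∑' y, G.P x y * ∑' z, B.indicator (G.Pn n y) z :=
        Summable.tsum_le_tsum (fun y => mul_le_mul_of_nonneg_left (ih y) (G.P_nonneg x y))
          (G.summable_P_mul_survive B n x) (G.summable_P_mul hp0 x _)
      _ = ∑' z, ∑' y, G.P x y * B.indicator (G.Pn n y) z :=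
        G.tsum_P_mul_tsum_comm hp0 x fun y z h =>
          G.dist_le_of_Pn_ne_zero (Set.indicator_apply_ne_zero.1 h).2
      _ = ∑' z, B.indicator (G.Pn (n + 1) x) z := by
        refine tsum_congr fun z => ?_
        by_cases hz : z ∈ B
        · simp [Set.indicator, hz, Pn]
        · simp [Set.indicator, hz]

theorem sq_tsum_Pn_le_hk_mul_muSet {B : Set V} (hp0 : G.condP0) (hB : B.Finite) (n : ℕ)
    (x : V) : (∑' y : B, G.Pn n x y) ^ 2 ≤ G.hk (2 * n) x x * G.muSet B := by
  obtain ⟨t, rfl⟩ := hB.exists_finset_coe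
  have hsumm : Summable fun y => G.Pn n x y ^ 2 / G.mu y :=
    summable_of_hasFiniteSupport <| (G.Pn_finite_support hp0 n x).subset fun y hy h0 =>
      hy (by simp [h0])
  rw [G.hk_two_mul_self hp0, muSet, Finset.tsum_subtype', Finset.tsum_subtype']
  calc (∑ y ∈ t, G.Pn n x y) ^ 2 ≤ (∑ y ∈ t, G.Pn n x y ^ 2 / G.mu y) * ∑ y ∈ t, G.mu y :=
        Finset.sum_sq_le_sum_mul_sum_of_sq_le_mul t
          (fun y _ => div_nonneg (sq_nonneg _) (G.mu_pos' y).le) (fun y _ => (G.mu_pos' y).le)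
          fun y _ => (div_mul_cancel₀ _ (G.mu_pos' y).ne').ge
    _ ≤ (∑' y, G.Pn n x y ^ 2 / G.mu y) * ∑ y ∈ t, G.mu y := by
        gcongr
        · exact Finset.sum_nonneg fun y _ => (G.mu_pos' y).le
        · exact hsumm.sum_le_tsum t fun y _ => div_nonneg (sq_nonneg _) (G.mu_pos' y).le

theorem meanExitOf_ball_le (hp0 : G.condP0) [Infinite V] {C : ℝ}
    (hTC : ∀ (x : V) (R : ℕ), 0 < R → ∀ y ∈ G.ball x R,
      G.meanExit x (2 * R) ≤ C * G.meanExit y R)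
    {x : V} {R : ℕ} {z : V} (hz : z ∈ G.ball x R) :
    G.meanExitOf (G.ball x R) z ≤ C * G.meanExit x R := by
  have hzx : G.dist z x < R := G.dist_comm z x ▸ hz
  have hsub : G.ball x R ⊆ G.ball z (2 * R) := fun y (hy : G.dist x y < R) =>
    show G.dist z y < 2 * R by linarith [G.dist_triangle z x y]
  calc G.meanExitOf (G.ball x R) z ≤ G.meanExit z (2 * R) :=
        G.meanExitOf_mono hp0 hsub (G.ball_finite hp0 z _) z
    _ ≤ C * G.meanExit x R := hTC z R (by omega) x hzx

end WeightedGraph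

open WeightedGraph in
theorem diag_lower_estimate_general {V : Type*} [Infinite V] (G : WeightedGraph V)
    (hp0 : G.condP0) (htc : G.condTC) :
    ∃ c > (0 : ℝ), ∀ (x : V) (n : ℕ), 1 ≤ n →
      c / G.vol x (G.einv x (2 * n)) ≤ G.hk (2 * n) x x := by
  obtain ⟨C, hC, hTC⟩ := htc
  refine ⟨1 / (4 * C ^ 2), by positivity, fun x n hn => ?_⟩
  set R := G.einv x (2 * n)
  have hB := G.ball_finite hp0 x R
  have hsurvive : 1 / (2 * C) ≤ G.survive (G.ball x R) n x :=
    G.one_div_two_mul_le_survive hp0 hB hn (by exact_mod_cast G.le_meanExit_einv hp0 x (2 * n))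
      fun z hz => G.meanExitOf_ball_le hp0 hTC hz
  refine div_le_of_le_mul₀ (tsum_nonneg fun y => (G.mu_pos' y).le)
    (div_nonneg (G.Pn_nonneg _ x x) (G.mu_pos' x).le) ?_
  calc 1 / (4 * C ^ 2) = (1 / (2 * C)) ^ 2 := by ring
    _ ≤ (∑' y : G.ball x R, G.Pn n x y) ^ 2 :=
        pow_le_pow_left₀ (by positivity) (hsurvive.trans (G.survive_le_tsum_Pn hp0 _ n x)) 2
    _ ≤ G.hk (2 * n) x x * G.vol x R := G.sq_tsum_Pn_le_hk_mul_muSet hp0 hB n x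

open WeightedGraph in
/-- Under `(p₀)`, `(VC)` and `(TC)` there is `c > 0` such that
`p_{2n}(x,x) ≥ c / V(x, e(x,2n))` for all `x` and `n ≥ 1`. -/
theorem diag_lower_estimate {V : Type*} [Countable V] [Infinite V] (G : WeightedGraph V)
    (hp0 : G.condP0) (hvc : G.condVC) (htc : G.condTC) :
    ∃ c > (0 : ℝ), ∀ (x : V) (n : ℕ), 1 ≤ n →
      c / G.vol x (G.einv x (2 * n)) ≤ G.hk (2 * n) x x :=
  diag_lower_estimate_general G hp0 htc
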